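/- The species ADF, equipped with the multiplications m_{X,Y}: ADF[X] ⊗ ADF[Y] → ADF[X ⊔ Y], F ⊗ G ↦ F ⋄ G, and the unit • ∈ ADF[∅], is a twisted algebra: (i) equivariance: for any bijections σ: X → X' and τ: Y → Y' of finite sets, m_{X',Y'} ∘ (ADF[σ] ⊗ ADF[τ]) = ADF[σ ⊔ τ] ∘ m_{X,Y}; (ii) associativity: (F ⋄ G) ⋄ H = F ⋄ (G ⋄ H) for all F ∈ ADF[X], G ∈ ADF[Y], H ∈ ADF[Z] with X, Y, Z pairwise disjoint; (iii) unitality: • ⋄ F = F = F ⋄ • for all F ∈ ADF[X]. -/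

import Mathlib

/-!
Preamble: angularly decorated planar rooted trees and forests, the species `ADF` of
pure angularly decorated forests, the product `⋄`, the grafting operator `B⁺`,
and the augmentation `ε`, following Foissy–Guo–Peng–Xie–Zhang,
"Species of Rota-Baxter algebras by rooted trees, twisted bialgebras and Fock functors".
-/

attribute [local instance 10] Classical.propDecidable

-- Angularly decorated planar rooted trees (`ATree`) and forests (`AForest`) with
-- angles decorated by elements of `E`.
mutual
  inductive ATree (E : Type) : Type where
    | leaf : ATree E
    | graft : AForest E → ATree E
  inductive AForest (E : Type) : Type where
    | single : ATree E → AForest E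
    | cons : ATree E → E → AForest E → AForest E
end

mutual
  /-- The depth of an angularly decorated tree. -/
  def ATree.depth {E : Type} : ATree E → ℕ
    | .leaf => 0
    | .graft F => AForest.depth F + 1
  /-- The depth of an angularly decorated forest. -/
  def AForest.depth {E : Type} : AForest E → ℕ
    | .single T => ATree.depth T
    | .cons T _ G => max (ATree.depth T) (AForest.depth G)
end

mutual
  /-- The list of angle decorations of a tree, from left to right. -/
  def ATree.decs {E : Type} : ATree E → List E
    | .leaf => []
    | .graft F => AForest.decs F
  /-- The list of angle decorations of a forest, from left to right. -/
  def AForest.decs {E : Type} : AForest E → List E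
    | .single T => ATree.decs T
    | .cons T x G => ATree.decs T ++ x :: AForest.decs G
end

mutual
  /-- Relabelling the angle decorations of a tree along a map. -/
  def ATree.relabel {E E' : Type} (f : E → E') : ATree E → ATree E'
    | .leaf => .leaf
    | .graft F => .graft (AForest.relabel f F)
  /-- Relabelling the angle decorations of a forest along a map. -/
  def AForest.relabel {E E' : Type} (f : E → E') : AForest E → AForest E'
    | .single T => .single (ATree.relabel f T)
    | .cons T x G => .cons (ATree.relabel f T) (f x) (AForest.relabel f G)
end

/-- The single-vertex tree `•`, as a forest. -/
def bulletF (E : Type) : AForest E := .single .leaf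

/-- The product `⋄` of angularly decorated forests, with values in linear combinations
of angularly decorated forests.  It is defined by induction on the sum of depths:
`• ⋄ F' = F'`, `F ⋄ • = F`,
`(T x G) ⋄ F' = T x (G ⋄ F')`,
and for trees `B⁺(F) ⋄ B⁺(F') = B⁺(B⁺(F) ⋄ F') + B⁺(F ⋄ B⁺(F')) + λ B⁺(F ⋄ F')`,
placed back into the surrounding forest. -/
noncomputable def forestMul {k : Type} [Field k] {E : Type} (lam : k) :
    AForest E → AForest E → (AForest E →₀ k)
  | .single .leaf, F' => Finsupp.single F' 1
  | F, .single .leaf => Finsupp.single F 1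
  | .cons T x G, F' =>
      Finsupp.mapDomain (fun H => AForest.cons T x H) (forestMul lam G F')
  | .single (.graft F), .cons .leaf y G' =>
      Finsupp.single (AForest.cons (ATree.graft F) y G') 1
  | .single (.graft F), .cons (.graft F') y G' =>
      Finsupp.mapDomain (fun S => AForest.cons S y G')
        (Finsupp.mapDomain ATree.graft
          (forestMul lam (AForest.single (ATree.graft F)) F' +
           forestMul lam F (AForest.single (ATree.graft F')) +
           lam • forestMul lam F F'))
  | .single (.graft F), .single (.graft F') =>
      Finsupp.mapDomain AForest.single
        (Finsupp.mapDomain ATree.graft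
          (forestMul lam (AForest.single (ATree.graft F)) F' +
           forestMul lam F (AForest.single (ATree.graft F')) +
           lam • forestMul lam F F'))
termination_by F F' => (AForest.depth F + AForest.depth F', sizeOf F + sizeOf F')
decreasing_by
  all_goals
    simp only [AForest.depth, ATree.depth, AForest.cons.sizeOf_spec, AForest.single.sizeOf_spec,
      ATree.graft.sizeOf_spec, ATree.leaf.sizeOf_spec]
    rw [Prod.lex_def]
    omega

/-- A forest over the decoration set `X` is pure if each element of `X` decorates
exactly one of its angles. -/
def IsPure {E : Type} (F : AForest E) : Prop :=
  F.decs.Nodup ∧ ∀ x : E, x ∈ F.decs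

/-- Pure angularly `X`-decorated rooted forests. -/
def PureForest (E : Type) : Type := {F : AForest E // IsPure F}

/-- The vector space spanned by all angularly `E`-decorated forests. -/
abbrev RawADF (k : Type) [Field k] (E : Type) : Type := AForest E →₀ k

/-- `ADF[X]`: the vector space with basis the pure angularly `X`-decorated forests. -/
abbrev ADF (k : Type) [Field k] (E : Type) : Type := PureForest E →₀ k

variable (k : Type) [Field k]

/-- The projection from the span of all forests onto `ADF[X]` (discarding non-pure forests). -/
noncomputable def toPureL (E : Type) : RawADF k E →ₗ[k] ADF k E where
  toFun f := Finsupp.subtypeDomain IsPure f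
  map_add' _ _ := Finsupp.subtypeDomain_add
  map_smul' _ _ := Finsupp.ext fun _ => rfl

/-- The inclusion of `ADF[X]` into the span of all forests. -/
noncomputable def rawOfL (E : Type) : ADF k E →ₗ[k] RawADF k E :=
  Finsupp.lmapDomain k k Subtype.val

/-- Relabelling decorations, on linear combinations of forests. -/
noncomputable def rawRelabelL {E E' : Type} (f : E → E') : RawADF k E →ₗ[k] RawADF k E' :=
  Finsupp.lmapDomain k k (AForest.relabel f)

/-- The grafting operator `B⁺` on linear combinations of forests. -/
noncomputable def rawGraftL (E : Type) : RawADF k E →ₗ[k] RawADF k E :=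
  Finsupp.lmapDomain k k (fun F => AForest.single (ATree.graft F))

/-- The Rota-Baxter operator `R_X = B⁺` on `ADF[X]`. -/
noncomputable def RadfL (E : Type) : ADF k E →ₗ[k] ADF k E :=
  (toPureL k E).comp ((rawGraftL k E).comp (rawOfL k E))

/-- `ADF[σ]`: the action of a bijection `σ : X ≃ Y` on `ADF[X]`. -/
noncomputable def ADFmapL {E E' : Type} (σ : E ≃ E') : ADF k E →ₗ[k] ADF k E' :=
  (toPureL k E').comp ((rawRelabelL k σ).comp (rawOfL k E))

/-- The augmentation `ε_X : ADF[X] → k`, the coefficient of the single-vertex tree `•`. -/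
noncomputable def epsL (E : Type) : ADF k E →ₗ[k] k :=
  (Finsupp.lapply (bulletF E)).comp (rawOfL k E)

/-- The bilinear extension of the product `⋄` to linear combinations of forests. -/
noncomputable def rawMulL {E : Type} (lam : k) : RawADF k E →ₗ[k] RawADF k E →ₗ[k] RawADF k E :=
  Finsupp.lsum k fun F =>
    LinearMap.toSpanSingleton k (RawADF k E →ₗ[k] RawADF k E)
      (Finsupp.lsum k fun G => LinearMap.toSpanSingleton k (RawADF k E) (forestMul lam F G))

/-- `ADF[X] → ADF[X ⊔ Y]`-part of the product. -/
noncomputable def inclL (X Y : Type) : ADF k X →ₗ[k] RawADF k (X ⊕ Y) :=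
  (rawRelabelL k Sum.inl).comp (rawOfL k X)

/-- `ADF[Y] → ADF[X ⊔ Y]`-part of the product. -/
noncomputable def inclR (X Y : Type) : ADF k Y →ₗ[k] RawADF k (X ⊕ Y) :=
  (rawRelabelL k Sum.inr).comp (rawOfL k Y)

/-- The multiplication `m_{X,Y} : ADF[X] ⊗ ADF[Y] → ADF[X ⊔ Y]`, `F ⊗ G ↦ F ⋄ G`
(as a bilinear map). -/
noncomputable def mulADF (lam : k) (X Y : Type) :
    ADF k X →ₗ[k] ADF k Y →ₗ[k] ADF k (X ⊕ Y) :=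
  ((((rawMulL k lam).comp (inclL k X Y)).compl₂ (inclR k X Y)).compr₂ (toPureL k (X ⊕ Y)))

theorem isPure_bulletF (E : Type) [IsEmpty E] : IsPure (bulletF E) :=
  ⟨by simp [bulletF, AForest.decs, ATree.decs], fun x => (IsEmpty.false x).elim⟩

/-- The unit `•` of `ADF`, an element of `ADF[∅]`. -/
noncomputable def bulletADF (E : Type) [IsEmpty E] : ADF k E :=
  Finsupp.single ⟨bulletF E, isPure_bulletF E⟩ 1

/-- The two-leaf forest `• x •` whose unique angle is decorated by
the unique element `x` of a singleton set `X`. -/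
def genF (E : Type) [Unique E] : AForest E :=
  .cons .leaf default (.single .leaf)

theorem isPure_genF (E : Type) [Unique E] : IsPure (genF E) := by
  constructor
  · simp [genF, AForest.decs, ATree.decs]
  · intro x
    simp [genF, AForest.decs, ATree.decs, Unique.eq_default x]

/-- The generator `• x •` of `ADF[{x}]`. -/
noncomputable def genADF (E : Type) [Unique E] : ADF k E :=
  Finsupp.single ⟨genF E, isPure_genF E⟩ 1

/-- The map `k → ADF[X]`, `c ↦ c • bullet` if `X` is empty, and `0` otherwise. -/
noncomputable def etaADF (E : Type) : k →ₗ[k] ADF k E :=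
  dite (IsEmpty E)
    (fun h => LinearMap.toSpanSingleton k (ADF k E) (@bulletADF k _ E h))
    (fun _ => 0)


/-!
The product `⋄` commutes with relabelling of decorations and concatenates decoration words, so
it maps pure forests to combinations of pure forests, and all three axioms reduce to identities
for the bilinear extension of `⋄` to arbitrary forests.  Equivariance and unitality are then
immediate.  Associativity is proved by induction on the total depth: left factors `T x F` and
factors involving `•` or a leaf are handled by the defining equations, while for grafted trees
the recursion for `B⁺(F) ⋄ B⁺(G)` is the Rota–Baxter identity `B⁺(a) ⋄ B⁺(b) = B⁺(a ⋆ b)` with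
`a ⋆ b = B⁺(a) ⋄ b + a ⋄ B⁺(b) + λ a ⋄ b`.  It reduces associativity on three grafted trees to
associativity of `⋆`, which expands into seven instances of lower depth.
-/

section FinsuppExt

variable {R α β N : Type*} [CommSemiring R] [AddCommMonoid N] [Module R N]

theorem Finsupp.linearMap_eq_of_single {f g : (α →₀ R) →ₗ[R] N}
    (h : ∀ a, f (Finsupp.single a 1) = g (Finsupp.single a 1)) (x : α →₀ R) : f x = g x := by
  rw [Finsupp.lhom_ext' (fun a => LinearMap.ext_ring (h a))]

theorem Finsupp.bilinearMap_eq_of_single {f g : (α →₀ R) →ₗ[R] (β →₀ R) →ₗ[R] N}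
    (h : ∀ a b,
      f (Finsupp.single a 1) (Finsupp.single b 1) = g (Finsupp.single a 1) (Finsupp.single b 1))
    (x : α →₀ R) (y : β →₀ R) : f x y = g x y := by
  rw [Finsupp.lhom_ext' (fun a => LinearMap.ext_ring
    (Finsupp.lhom_ext' (fun b => LinearMap.ext_ring (h a b))))]

theorem Finsupp.mapDomain_mem_supported {f : α → β} {s : Set α} {t : Set β}
    (h : Set.MapsTo f s t) {r : α →₀ R} (hr : r ∈ Finsupp.supported R R s) :
    Finsupp.mapDomain f r ∈ Finsupp.supported R R t :=
  Finsupp.supported_comap_lmapDomain R R f t (Finsupp.supported_mono (fun _ hx => h hx) hr)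

end FinsuppExt

section RotaBaxter

variable {R V : Type*} [CommSemiring R] [AddCommMonoid V] [Module R V]
  (M : V →ₗ[R] V →ₗ[R] V) (B : V →ₗ[R] V) (lam : R)

/-- `x ⋆ y = B(x) y + x B(y) + λ x y`, in terms of which the Rota–Baxter identity of weight `λ`
reads `B(x) B(y) = B(x ⋆ y)`. -/
def rbStar : V →ₗ[R] V →ₗ[R] V :=
  M ∘ₗ B + M.compl₂ B + lam • M

theorem rbStar_apply (x y : V) :
    rbStar M B lam x y = M (B x) y + M x (B y) + lam • M x y := rfl

/-- The inductive step for associativity of a product satisfying a Rota–Baxter identity: it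
reduces associativity on `(B f, B g, Rh h)`, for any `Rh` that `B x` multiplies into as it does
into `B`, to associativity of `⋆` on `(f, g, h)`, i.e. to seven triples of lower `B`-degree. -/
theorem assoc_of_rotaBaxter (hB : ∀ x y, M (B x) (B y) = B (rbStar M B lam x y))
    {Rh : V →ₗ[R] V} (hR : ∀ x y, M (B x) (Rh y) = Rh (rbStar M B lam x y)) {f g h : V}
    (h₁ : M (M (B f) (B g)) h = M (B f) (M (B g) h))
    (h₂ : M (M (B f) g) (B h) = M (B f) (M g (B h)))
    (h₃ : M (M f (B g)) (B h) = M f (M (B g) (B h)))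
    (h₄ : M (M (B f) g) h = M (B f) (M g h))
    (h₅ : M (M f (B g)) h = M f (M (B g) h))
    (h₆ : M (M f g) (B h) = M f (M g (B h)))
    (h₇ : M (M f g) h = M f (M g h)) :
    M (M (B f) (B g)) (Rh h) = M (B f) (M (B g) (Rh h)) := by
  have star_assoc :
      rbStar M B lam (rbStar M B lam f g) h = rbStar M B lam f (rbStar M B lam g h) := by
    have lhs : rbStar M B lam (rbStar M B lam f g) h = M (M (B f) (B g)) h
        + M (rbStar M B lam f g) (B h) + lam • M (rbStar M B lam f g) h := by rw [hB]; rfl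
    have rhs : rbStar M B lam f (rbStar M B lam g h) = M (B f) (rbStar M B lam g h)
        + M f (M (B g) (B h)) + lam • M f (rbStar M B lam g h) := by rw [hB]; rfl
    rw [lhs, rhs]
    simp only [rbStar_apply, map_add, map_smul, LinearMap.add_apply, LinearMap.smul_apply,
      h₁, h₂, h₃, h₄, h₅, h₆, h₇, smul_add]
    abel
  rw [hB, hR, hR, hR, star_assoc]

end RotaBaxter

noncomputable def consL {E : Type} (T : ATree E) (x : E) : RawADF k E →ₗ[k] RawADF k E :=
  Finsupp.lmapDomain k k (AForest.cons T x)

/-- The forest `B⁺(F) y G`, extended bilinearly in `F` and `G`. -/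
noncomputable def graftConsL {E : Type} (y : E) :
    RawADF k E →ₗ[k] RawADF k E →ₗ[k] RawADF k E :=
  Finsupp.lsum k fun F => LinearMap.toSpanSingleton k _ (consL k (.graft F) y)

def decsSpan {E : Type} (L : List E) : Submodule k (RawADF k E) :=
  Finsupp.supported k k {F | F.decs = L}

section Forests

variable {k} {E E' E'' : Type}

mutual
theorem ATree.relabel_relabel (f : E → E') (g : E' → E'') (T : ATree E) :
    (T.relabel f).relabel g = T.relabel (g ∘ f) := by
  cases T with
  | leaf => rfl
  | graft F => simp only [ATree.relabel, AForest.relabel_relabel]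
theorem AForest.relabel_relabel (f : E → E') (g : E' → E'') (F : AForest E) :
    (F.relabel f).relabel g = F.relabel (g ∘ f) := by
  cases F with
  | single T => simp only [AForest.relabel, ATree.relabel_relabel]
  | cons T x G => simp only [AForest.relabel, ATree.relabel_relabel, AForest.relabel_relabel,
      Function.comp_apply]
end

mutual
theorem ATree.relabel_id (T : ATree E) : T.relabel id = T := by
  cases T with
  | leaf => rfl
  | graft F => simp only [ATree.relabel, AForest.relabel_id]
theorem AForest.relabel_id (F : AForest E) : F.relabel id = F := by
  cases F with
  | single T => simp only [AForest.relabel, ATree.relabel_id]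
  | cons T x G => simp only [AForest.relabel, ATree.relabel_id, AForest.relabel_id, id]
end

mutual
theorem ATree.decs_relabel (f : E → E') (T : ATree E) :
    (T.relabel f).decs = T.decs.map f := by
  cases T with
  | leaf => rfl
  | graft F => simp only [ATree.relabel, ATree.decs, AForest.decs_relabel]
theorem AForest.decs_relabel (f : E → E') (F : AForest E) :
    (F.relabel f).decs = F.decs.map f := by
  cases F with
  | single T => simp only [AForest.relabel, AForest.decs, ATree.decs_relabel]
  | cons T x G => simp only [AForest.relabel, AForest.decs, ATree.decs_relabel,
      AForest.decs_relabel, List.map_append, List.map_cons]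
end

theorem rawRelabelL_single (f : E → E') (F : AForest E) (c : k) :
    rawRelabelL k f (Finsupp.single F c) = Finsupp.single (F.relabel f) c :=
  Finsupp.mapDomain_single

theorem rawRelabelL_rawRelabelL (f : E → E') (g : E' → E'') (r : RawADF k E) :
    rawRelabelL k g (rawRelabelL k f r) = rawRelabelL k (g ∘ f) r := by
  simp only [rawRelabelL, Finsupp.lmapDomain_apply, ← Finsupp.mapDomain_comp]
  exact congrArg (Finsupp.mapDomain · r) (funext (AForest.relabel_relabel f g))

theorem rawRelabelL_id (r : RawADF k E) : rawRelabelL k id r = r := by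
  rw [rawRelabelL, Finsupp.lmapDomain_apply, funext AForest.relabel_id]
  exact Finsupp.mapDomain_id

theorem rawGraftL_single (F : AForest E) (c : k) :
    rawGraftL k E (Finsupp.single F c) = Finsupp.single (.single (.graft F)) c :=
  Finsupp.mapDomain_single

theorem consL_single (T : ATree E) (x : E) (F : AForest E) (c : k) :
    consL k T x (Finsupp.single F c) = Finsupp.single (.cons T x F) c :=
  Finsupp.mapDomain_single

theorem graftConsL_single_left (y : E) (F : AForest E) (s : RawADF k E) :
    graftConsL k y (Finsupp.single F 1) s = consL k (.graft F) y s := by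
  simp [graftConsL]

theorem graftConsL_single_right (y : E) (r : RawADF k E) (G : AForest E) :
    graftConsL k y r (Finsupp.single G 1)
      = Finsupp.mapDomain (fun F => AForest.cons (.graft F) y G) r :=
  Finsupp.linearMap_eq_of_single (f := (graftConsL k y).flip (Finsupp.single G 1))
    (g := Finsupp.lmapDomain k k (fun F => AForest.cons (.graft F) y G))
    (fun F => by simp [graftConsL_single_left, consL_single]) r

theorem rawMulL_single_single {lam : k} (F G : AForest E) :
    rawMulL k lam (Finsupp.single F 1) (Finsupp.single G 1) = forestMul lam F G := by
  simp [rawMulL]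

end Forests

section ForestMul

variable {k} {E : Type} {lam : k}

theorem forestMul_leaf_left (F : AForest E) :
    forestMul lam (.single .leaf) F = Finsupp.single F 1 := by
  rw [forestMul]

theorem forestMul_leaf_right (F : AForest E) :
    forestMul lam F (.single .leaf) = Finsupp.single F 1 := by
  rcases F with (_ | _) | _ <;> (rw [forestMul]) <;> simp

theorem forestMul_cons_left (T : ATree E) (x : E) (G F : AForest E) :
    forestMul lam (.cons T x G) F = consL k T x (forestMul lam G F) := by
  rcases F with (_ | _) | (_ | _)
  · rw [forestMul_leaf_right, forestMul_leaf_right, consL_single]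
  all_goals (rw [forestMul]) <;> simp [consL]

theorem forestMul_single_cons_leaf (T : ATree E) (y : E) (G : AForest E) :
    forestMul lam (.single T) (.cons .leaf y G) = Finsupp.single (.cons T y G) 1 := by
  rcases T with _ | F
  · exact forestMul_leaf_left _
  · rw [forestMul]

theorem rbStar_single_single (F G : AForest E) :
    rbStar (rawMulL k lam) (rawGraftL k E) lam (Finsupp.single F 1) (Finsupp.single G 1)
      = forestMul lam (.single (.graft F)) G + forestMul lam F (.single (.graft G))
        + lam • forestMul lam F G := by
  rw [rbStar_apply, rawGraftL_single, rawGraftL_single, rawMulL_single_single,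
    rawMulL_single_single, rawMulL_single_single]

theorem forestMul_graft_cons_graft (F G : AForest E) (y : E) (H : AForest E) :
    forestMul lam (.single (.graft F)) (.cons (.graft G) y H)
      = graftConsL k y (rbStar (rawMulL k lam) (rawGraftL k E) lam
          (Finsupp.single F 1) (Finsupp.single G 1)) (Finsupp.single H 1) := by
  rw [rbStar_single_single, graftConsL_single_right, forestMul, ← Finsupp.mapDomain_comp]
  rfl

theorem forestMul_graft_graft (F G : AForest E) :
    forestMul lam (.single (.graft F)) (.single (.graft G))
      = rawGraftL k E (rbStar (rawMulL k lam) (rawGraftL k E) lam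
          (Finsupp.single F 1) (Finsupp.single G 1)) := by
  rw [rbStar_single_single, forestMul, ← Finsupp.mapDomain_comp]
  rfl

end ForestMul

section RawProduct

variable {k} {E : Type} {lam : k}

theorem rawMulL_leaf_left (s : RawADF k E) :
    rawMulL k lam (Finsupp.single (.single .leaf) 1) s = s :=
  Finsupp.linearMap_eq_of_single (g := LinearMap.id)
    (fun F => by rw [rawMulL_single_single, forestMul_leaf_left]; rfl) s

theorem rawMulL_leaf_right (r : RawADF k E) :
    rawMulL k lam r (Finsupp.single (.single .leaf) 1) = r :=
  Finsupp.linearMap_eq_of_single (f := (rawMulL k lam).flip _) (g := LinearMap.id)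
    (fun F => by rw [LinearMap.flip_apply, rawMulL_single_single, forestMul_leaf_right]; rfl) r

theorem rawMulL_consL (T : ATree E) (x : E) (r s : RawADF k E) :
    rawMulL k lam (consL k T x r) s = consL k T x (rawMulL k lam r s) :=
  Finsupp.bilinearMap_eq_of_single (f := rawMulL k lam ∘ₗ consL k T x)
    (g := (rawMulL k lam).compr₂ (consL k T x))
    (fun F G => by simp [consL_single, rawMulL_single_single, forestMul_cons_left]) r s

theorem rawMulL_single_consL_leaf (T : ATree E) (y : E) (s : RawADF k E) :
    rawMulL k lam (Finsupp.single (.single T) 1) (consL k .leaf y s) = consL k T y s :=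
  Finsupp.linearMap_eq_of_single
    (f := rawMulL k lam (Finsupp.single (.single T) 1) ∘ₗ consL k .leaf y)
    (fun G => by
      simp [consL_single, rawMulL_single_single, forestMul_single_cons_leaf]) s

theorem rawMulL_graftConsL (y : E) (r s t : RawADF k E) :
    rawMulL k lam (graftConsL k y r s) t = graftConsL k y r (rawMulL k lam s t) :=
  Finsupp.linearMap_eq_of_single
    (f := (rawMulL k lam).flip t ∘ₗ (graftConsL k y).flip s)
    (g := (graftConsL k y).flip (rawMulL k lam s t))
    (fun F => by simp [graftConsL_single_left, rawMulL_consL]) r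

theorem rawMulL_rawGraftL_consL_leaf (y : E) (r s : RawADF k E) :
    rawMulL k lam (rawGraftL k E r) (consL k .leaf y s) = graftConsL k y r s :=
  Finsupp.linearMap_eq_of_single
    (f := (rawMulL k lam).flip (consL k .leaf y s) ∘ₗ rawGraftL k E)
    (g := (graftConsL k y).flip s)
    (fun F => by simp [rawGraftL_single, rawMulL_single_consL_leaf, graftConsL_single_left]) r

theorem rawMulL_rawGraftL_rawGraftL (r s : RawADF k E) :
    rawMulL k lam (rawGraftL k E r) (rawGraftL k E s)
      = rawGraftL k E (rbStar (rawMulL k lam) (rawGraftL k E) lam r s) :=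
  Finsupp.bilinearMap_eq_of_single
    (f := (rawMulL k lam).compl₁₂ (rawGraftL k E) (rawGraftL k E))
    (g := (rbStar (rawMulL k lam) (rawGraftL k E) lam).compr₂ (rawGraftL k E))
    (fun F G => by
      simp only [LinearMap.compl₁₂_apply, LinearMap.compr₂_apply, rawGraftL_single,
        rawMulL_single_single, forestMul_graft_graft]) r s

theorem rawMulL_rawGraftL_graftConsL (y : E) (r s t : RawADF k E) :
    rawMulL k lam (rawGraftL k E r) (graftConsL k y s t)
      = graftConsL k y (rbStar (rawMulL k lam) (rawGraftL k E) lam r s) t := by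
  have on_singles : ∀ F G, rawMulL k lam (rawGraftL k E (Finsupp.single F 1))
      (graftConsL k y (Finsupp.single G 1) t) = graftConsL k y
        (rbStar (rawMulL k lam) (rawGraftL k E) lam (Finsupp.single F 1) (Finsupp.single G 1)) t :=
    fun F G => Finsupp.linearMap_eq_of_single
      (f := rawMulL k lam (rawGraftL k E (Finsupp.single F 1)) ∘ₗ
        graftConsL k y (Finsupp.single G 1))
      (fun H => by
        simp [graftConsL_single_left, consL_single, rawGraftL_single, rawMulL_single_single,
          forestMul_graft_cons_graft]) t
  exact Finsupp.bilinearMap_eq_of_single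
    (f := (rawMulL k lam ∘ₗ rawGraftL k E).compl₂ ((graftConsL k y).flip t))
    (g := (rbStar (rawMulL k lam) (rawGraftL k E) lam).compr₂ ((graftConsL k y).flip t))
    on_singles r s

end RawProduct

section Assoc

variable {k} {E : Type} {lam : k}

/-- `R` is `B⁺` or `B⁺(·) z H'`: the two shapes of a third factor beginning with a grafted tree. -/
theorem rawMulL_assoc_graft_graft (F G H : AForest E) {R : RawADF k E →ₗ[k] RawADF k E}
    (hR : ∀ x y, rawMulL k lam (rawGraftL k E x) (R y)
      = R (rbStar (rawMulL k lam) (rawGraftL k E) lam x y))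
    (IH : ∀ F' G' H' : AForest E,
      F'.depth + G'.depth + H'.depth < F.depth + G.depth + H.depth + 3 →
        rawMulL k lam (rawMulL k lam (Finsupp.single F' 1) (Finsupp.single G' 1))
            (Finsupp.single H' 1)
          = rawMulL k lam (Finsupp.single F' 1)
              (rawMulL k lam (Finsupp.single G' 1) (Finsupp.single H' 1))) :
    rawMulL k lam (rawMulL k lam (rawGraftL k E (Finsupp.single F 1))
        (rawGraftL k E (Finsupp.single G 1))) (R (Finsupp.single H 1))
      = rawMulL k lam (rawGraftL k E (Finsupp.single F 1))
          (rawMulL k lam (rawGraftL k E (Finsupp.single G 1)) (R (Finsupp.single H 1))) := by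
  refine assoc_of_rotaBaxter _ _ _ rawMulL_rawGraftL_rawGraftL hR ?_ ?_ ?_ ?_ ?_ ?_ ?_ <;>
    (try simp only [rawGraftL_single]) <;>
    exact IH _ _ _ (by (try simp only [AForest.depth, ATree.depth]); omega)

theorem rawMulL_assoc_single (F G H : AForest E) :
    rawMulL k lam (rawMulL k lam (Finsupp.single F 1) (Finsupp.single G 1)) (Finsupp.single H 1)
      = rawMulL k lam (Finsupp.single F 1)
          (rawMulL k lam (Finsupp.single G 1) (Finsupp.single H 1)) := by
  match F, G, H with
  | .single .leaf, G, H => rw [rawMulL_leaf_left, rawMulL_leaf_left]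
  | F, .single .leaf, H => rw [rawMulL_leaf_right, rawMulL_leaf_left]
  | F, G, .single .leaf => rw [rawMulL_leaf_right, rawMulL_leaf_right]
  | .cons T x F, G, H =>
      rw [← consL_single T x F, rawMulL_consL, rawMulL_consL, rawMulL_consL,
        rawMulL_assoc_single F G H]
  | .single T, .cons .leaf y G, H =>
      rw [← consL_single .leaf y G, rawMulL_single_consL_leaf, rawMulL_consL, rawMulL_consL,
        rawMulL_single_consL_leaf]
  | .single (.graft F), .cons (.graft G) y G', H =>
      rw [← rawGraftL_single, ← consL_single, ← graftConsL_single_left,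
        rawMulL_rawGraftL_graftConsL, rawMulL_graftConsL, rawMulL_graftConsL,
        rawMulL_rawGraftL_graftConsL]
  | .single (.graft F), .single (.graft G), .cons .leaf z H =>
      rw [← rawGraftL_single F, ← rawGraftL_single G, ← consL_single,
        rawMulL_rawGraftL_rawGraftL, rawMulL_rawGraftL_consL_leaf, rawMulL_rawGraftL_consL_leaf,
        rawMulL_rawGraftL_graftConsL]
  | .single (.graft F), .single (.graft G), .cons (.graft H) z H' =>
      simpa only [rawGraftL_single, LinearMap.flip_apply, graftConsL_single_left, consL_single]
        using rawMulL_assoc_graft_graft F G H (R := (graftConsL k z).flip (Finsupp.single H' 1))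
          (fun x y => by simp only [LinearMap.flip_apply, rawMulL_rawGraftL_graftConsL])
          (fun F' G' H' _ => rawMulL_assoc_single F' G' H')
  | .single (.graft F), .single (.graft G), .single (.graft H) =>
      simpa only [rawGraftL_single]
        using rawMulL_assoc_graft_graft F G H rawMulL_rawGraftL_rawGraftL
          (fun F' G' H' _ => rawMulL_assoc_single F' G' H')
termination_by (F.depth + G.depth + H.depth, sizeOf F + sizeOf G + sizeOf H)
decreasing_by
  all_goals
    simp only [AForest.depth, ATree.depth, AForest.cons.sizeOf_spec, AForest.single.sizeOf_spec,
      ATree.graft.sizeOf_spec]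
    rw [Prod.lex_def]
    omega

theorem rawMulL_assoc (r s t : RawADF k E) :
    rawMulL k lam (rawMulL k lam r s) t = rawMulL k lam r (rawMulL k lam s t) := by
  have on_singles : ∀ F G,
      rawMulL k lam (rawMulL k lam (Finsupp.single F 1) (Finsupp.single G 1)) t
        = rawMulL k lam (Finsupp.single F 1) (rawMulL k lam (Finsupp.single G 1) t) :=
    fun F G => Finsupp.linearMap_eq_of_single
      (g := rawMulL k lam (Finsupp.single F 1) ∘ₗ rawMulL k lam (Finsupp.single G 1))
      (rawMulL_assoc_single F G) t
  exact Finsupp.bilinearMap_eq_of_single (f := (rawMulL k lam).compr₂ ((rawMulL k lam).flip t))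
    (g := (rawMulL k lam).compl₂ ((rawMulL k lam).flip t)) on_singles r s

end Assoc

section Relabel

variable {k} {E E' : Type} {lam : k} (f : E → E')

theorem rawRelabelL_consL (T : ATree E) (x : E) (r : RawADF k E) :
    rawRelabelL k f (consL k T x r) = consL k (T.relabel f) (f x) (rawRelabelL k f r) :=
  Finsupp.linearMap_eq_of_single (f := rawRelabelL k f ∘ₗ consL k T x)
    (g := consL k (T.relabel f) (f x) ∘ₗ rawRelabelL k f)
    (fun F => by simp only [LinearMap.comp_apply, consL_single, rawRelabelL_single]; rfl) r

theorem rawRelabelL_rawGraftL (r : RawADF k E) :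
    rawRelabelL k f (rawGraftL k E r) = rawGraftL k E' (rawRelabelL k f r) :=
  Finsupp.linearMap_eq_of_single (f := rawRelabelL k f ∘ₗ rawGraftL k E)
    (g := rawGraftL k E' ∘ₗ rawRelabelL k f)
    (fun F => by simp only [LinearMap.comp_apply, rawGraftL_single, rawRelabelL_single]; rfl) r

theorem rawRelabelL_graftConsL (y : E) (r s : RawADF k E) :
    rawRelabelL k f (graftConsL k y r s)
      = graftConsL k (f y) (rawRelabelL k f r) (rawRelabelL k f s) :=
  Finsupp.bilinearMap_eq_of_single (f := (graftConsL k y).compr₂ (rawRelabelL k f))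
    (g := (graftConsL k (f y)).compl₁₂ (rawRelabelL k f) (rawRelabelL k f))
    (fun F G => by
      simp only [LinearMap.compr₂_apply, LinearMap.compl₁₂_apply, graftConsL_single_left,
        consL_single, rawRelabelL_single]
      rfl) r s

theorem rawRelabelL_forestMul (F G : AForest E) :
    rawRelabelL k f (forestMul lam F G) = forestMul lam (F.relabel f) (G.relabel f) := by
  match F, G with
  | .single .leaf, G =>
      rw [forestMul_leaf_left, rawRelabelL_single]
      exact (forestMul_leaf_left _).symm
  | F, .single .leaf =>
      rw [forestMul_leaf_right, rawRelabelL_single]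
      exact (forestMul_leaf_right _).symm
  | .cons T x G, F' =>
      rw [forestMul_cons_left, rawRelabelL_consL, rawRelabelL_forestMul G F']
      exact (forestMul_cons_left _ _ _ _).symm
  | .single (.graft F), .cons .leaf y G =>
      rw [forestMul_single_cons_leaf, rawRelabelL_single]
      exact (forestMul_single_cons_leaf _ _ _).symm
  | .single (.graft F), .cons (.graft F') y G =>
      rw [forestMul_graft_cons_graft, rawRelabelL_graftConsL, rawRelabelL_single,
        rbStar_single_single, map_add (rawRelabelL k f), map_add (rawRelabelL k f),
        map_smul (rawRelabelL k f), rawRelabelL_forestMul (AForest.single (.graft F)) F',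
        rawRelabelL_forestMul F (AForest.single (.graft F')), rawRelabelL_forestMul F F']
      simp only [AForest.relabel, ATree.relabel]
      rw [forestMul_graft_cons_graft, rbStar_single_single]
  | .single (.graft F), .single (.graft F') =>
      rw [forestMul_graft_graft, rawRelabelL_rawGraftL, rbStar_single_single,
        map_add (rawRelabelL k f), map_add (rawRelabelL k f), map_smul (rawRelabelL k f),
        rawRelabelL_forestMul (AForest.single (.graft F)) F',
        rawRelabelL_forestMul F (AForest.single (.graft F')), rawRelabelL_forestMul F F']
      simp only [AForest.relabel, ATree.relabel]
      rw [forestMul_graft_graft, rbStar_single_single]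
termination_by (F.depth + G.depth, sizeOf F + sizeOf G)
decreasing_by
  all_goals
    simp only [AForest.depth, ATree.depth, AForest.cons.sizeOf_spec, AForest.single.sizeOf_spec,
      ATree.graft.sizeOf_spec]
    rw [Prod.lex_def]
    omega

theorem rawRelabelL_rawMulL (r s : RawADF k E) :
    rawRelabelL k f (rawMulL k lam r s)
      = rawMulL k lam (rawRelabelL k f r) (rawRelabelL k f s) :=
  Finsupp.bilinearMap_eq_of_single (f := (rawMulL k lam).compr₂ (rawRelabelL k f))
    (g := (rawMulL k lam).compl₁₂ (rawRelabelL k f) (rawRelabelL k f))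
    (fun F G => by
      simp only [LinearMap.compr₂_apply, LinearMap.compl₁₂_apply, rawRelabelL_single,
        rawMulL_single_single, rawRelabelL_forestMul]) r s

end Relabel

section Decorations

variable {k} {E E' : Type} {lam : k}

theorem forestMul_mem_decsSpan (F G : AForest E) :
    forestMul lam F G ∈ decsSpan k (F.decs ++ G.decs) := by
  match F, G with
  | .single .leaf, G =>
      rw [forestMul_leaf_left]
      exact Finsupp.single_mem_supported k 1 rfl
  | F, .single .leaf =>
      rw [forestMul_leaf_right]
      exact Finsupp.single_mem_supported k 1 (by simp [AForest.decs, ATree.decs])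
  | .cons T x G, F' =>
      rw [forestMul_cons_left]
      exact Finsupp.mapDomain_mem_supported (fun _ hH => by simp_all [AForest.decs])
        (forestMul_mem_decsSpan G F')
  | .single (.graft F), .cons .leaf y G =>
      rw [forestMul_single_cons_leaf]
      exact Finsupp.single_mem_supported k 1 (by simp [AForest.decs, ATree.decs])
  | .single (.graft F), .cons (.graft F') y G =>
      rw [forestMul_graft_cons_graft, graftConsL_single_right, rbStar_single_single]
      exact Finsupp.mapDomain_mem_supported (fun _ hH => by simp_all [AForest.decs, ATree.decs])
        (add_mem (add_mem (forestMul_mem_decsSpan _ F') (forestMul_mem_decsSpan F _))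
          (Submodule.smul_mem _ _ (forestMul_mem_decsSpan F F')))
  | .single (.graft F), .single (.graft F') =>
      rw [forestMul_graft_graft, rbStar_single_single]
      exact Finsupp.mapDomain_mem_supported (fun _ hH => by simp_all [AForest.decs, ATree.decs])
        (add_mem (add_mem (forestMul_mem_decsSpan _ F') (forestMul_mem_decsSpan F _))
          (Submodule.smul_mem _ _ (forestMul_mem_decsSpan F F')))
termination_by (F.depth + G.depth, sizeOf F + sizeOf G)
decreasing_by
  all_goals
    simp only [AForest.depth, ATree.depth, AForest.cons.sizeOf_spec, AForest.single.sizeOf_spec,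
      ATree.graft.sizeOf_spec]
    rw [Prod.lex_def]
    omega

theorem isPure_relabel (σ : E ≃ E') {F : AForest E} (h : IsPure F) : IsPure (F.relabel σ) := by
  refine ⟨?_, fun x => ?_⟩ <;> rw [AForest.decs_relabel]
  · exact h.1.map σ.injective
  · exact List.mem_map.mpr ⟨σ.symm x, h.2 _, σ.apply_symm_apply x⟩

theorem isPure_of_decs_eq_append {X Y : Type} {F : AForest (X ⊕ Y)} {F₁ : AForest X}
    {F₂ : AForest Y} (h₁ : IsPure F₁) (h₂ : IsPure F₂)
    (h : F.decs = F₁.decs.map Sum.inl ++ F₂.decs.map Sum.inr) : IsPure F := by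
  refine ⟨?_, ?_⟩ <;> rw [h]
  · exact List.nodup_append.mpr ⟨h₁.1.map Sum.inl_injective, h₂.1.map Sum.inr_injective,
      by simp⟩
  · rintro (x | y) <;> simp [h₁.2, h₂.2]

end Decorations

section Species

variable {k} {E E' X X' Y Y' Z : Type} {lam : k}

theorem rawOfL_injective : Function.Injective (rawOfL k E) :=
  Finsupp.mapDomain_injective Subtype.val_injective

theorem rawOfL_single (F : PureForest E) (c : k) :
    rawOfL k E (Finsupp.single F c) = Finsupp.single F.val c :=
  Finsupp.mapDomain_single

theorem rawOfL_mem_supported (F : ADF k E) :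
    rawOfL k E F ∈ Finsupp.supported k k {F | IsPure F} :=
  Finsupp.mapDomain_mem_supported (s := Set.univ) (fun F _ => F.2)
    ((Finsupp.mem_supported k F).mpr (Set.subset_univ _))

theorem rawOfL_toPureL {r : RawADF k E} (hr : r ∈ Finsupp.supported k k {F | IsPure F}) :
    rawOfL k E (toPureL k E r) = r :=
  calc rawOfL k E (toPureL k E r) = (r.subtypeDomain IsPure).extendDomain := by
        rw [Finsupp.extendDomain_eq_embDomain_subtype, Finsupp.embDomain_eq_mapDomain]
        rfl
    _ = r := Finsupp.extendDomain_subtypeDomain r fun F hF => (Finsupp.mem_supported k r).mp hr hF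

theorem rawOfL_ADFmapL (σ : E ≃ E') (F : ADF k E) :
    rawOfL k E' (ADFmapL k σ F) = rawRelabelL k σ (rawOfL k E F) :=
  rawOfL_toPureL (Finsupp.mapDomain_mem_supported (f := AForest.relabel σ) (s := {F | IsPure F})
    (fun _ h => isPure_relabel σ h) (rawOfL_mem_supported F))

theorem rawOfL_mulADF (F : ADF k X) (G : ADF k Y) :
    rawOfL k (X ⊕ Y) (mulADF k lam X Y F G)
      = rawMulL k lam (inclL k X Y F) (inclR k X Y G) := by
  refine Finsupp.bilinearMap_eq_of_single (f := (mulADF k lam X Y).compr₂ (rawOfL k _))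
    (g := (rawMulL k lam ∘ₗ inclL k X Y).compl₂ (inclR k X Y)) (fun F G => ?_) F G
  have hpure : rawMulL k lam (inclL k X Y (Finsupp.single F 1)) (inclR k X Y (Finsupp.single G 1))
      ∈ Finsupp.supported k k {F | IsPure F} := by
    simp only [inclL, inclR, LinearMap.comp_apply, rawOfL_single, rawRelabelL_single,
      rawMulL_single_single]
    refine Finsupp.supported_mono (fun H hH => isPure_of_decs_eq_append F.2 G.2 ?_)
      (forestMul_mem_decsSpan _ _)
    rw [hH, AForest.decs_relabel, AForest.decs_relabel]
  exact rawOfL_toPureL hpure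

theorem ADFmapL_mulADF (σ : X ≃ X') (τ : Y ≃ Y') (F : ADF k X) (G : ADF k Y) :
    ADFmapL k (σ.sumCongr τ) (mulADF k lam X Y F G)
      = mulADF k lam X' Y' (ADFmapL k σ F) (ADFmapL k τ G) := by
  apply rawOfL_injective
  simp only [rawOfL_ADFmapL, rawOfL_mulADF, inclL, inclR, LinearMap.comp_apply,
    rawRelabelL_rawMulL, rawRelabelL_rawRelabelL]
  rfl

theorem mulADF_assoc (F : ADF k X) (G : ADF k Y) (H : ADF k Z) :
    ADFmapL k (Equiv.sumAssoc X Y Z) (mulADF k lam (X ⊕ Y) Z (mulADF k lam X Y F G) H)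
      = mulADF k lam X (Y ⊕ Z) F (mulADF k lam Y Z G H) := by
  apply rawOfL_injective
  simp only [rawOfL_ADFmapL, rawOfL_mulADF, inclL, inclR, LinearMap.comp_apply,
    rawRelabelL_rawMulL, rawRelabelL_rawRelabelL, rawMulL_assoc]
  rfl

theorem inclL_bulletADF :
    inclL k Empty X (bulletADF k Empty) = Finsupp.single (.single .leaf) 1 :=
  (congrArg (rawRelabelL k Sum.inl) Finsupp.mapDomain_single).trans Finsupp.mapDomain_single

theorem inclR_bulletADF :
    inclR k X Empty (bulletADF k Empty) = Finsupp.single (.single .leaf) 1 :=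
  (congrArg (rawRelabelL k Sum.inr) Finsupp.mapDomain_single).trans Finsupp.mapDomain_single

theorem mulADF_bulletADF_left (F : ADF k X) :
    ADFmapL k (Equiv.emptySum Empty X) (mulADF k lam Empty X (bulletADF k Empty) F) = F := by
  apply rawOfL_injective
  rw [rawOfL_ADFmapL, rawOfL_mulADF, inclL_bulletADF, rawMulL_leaf_left, inclR,
    LinearMap.comp_apply, rawRelabelL_rawRelabelL]
  exact rawRelabelL_id _

theorem mulADF_bulletADF_right (F : ADF k X) :
    ADFmapL k (Equiv.sumEmpty X Empty) (mulADF k lam X Empty F (bulletADF k Empty)) = F := by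
  apply rawOfL_injective
  rw [rawOfL_ADFmapL, rawOfL_mulADF, inclR_bulletADF, rawMulL_leaf_right, inclL,
    LinearMap.comp_apply, rawRelabelL_rawRelabelL]
  exact rawRelabelL_id _

end Species

/-- The species `ADF`, equipped with the multiplications
`m_{X,Y} : ADF[X] ⊗ ADF[Y] → ADF[X ⊔ Y]`, `F ⊗ G ↦ F ⋄ G` and the unit `• ∈ ADF[∅]`,
is a twisted algebra: (i) equivariance, (ii) associativity, (iii) unitality. -/
theorem adf_twisted_algebra (lam : k) :
    -- (i) equivariance
    (∀ (X X' Y Y' : Type) [Fintype X] [Fintype X'] [Fintype Y] [Fintype Y']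
        (σ : X ≃ X') (τ : Y ≃ Y') (F : ADF k X) (G : ADF k Y),
        ADFmapL k (σ.sumCongr τ) (mulADF k lam X Y F G) =
          mulADF k lam X' Y' (ADFmapL k σ F) (ADFmapL k τ G))
    ∧
    -- (ii) associativity
    (∀ (X Y Z : Type) [Fintype X] [Fintype Y] [Fintype Z]
        (F : ADF k X) (G : ADF k Y) (H : ADF k Z),
        ADFmapL k (Equiv.sumAssoc X Y Z)
            (mulADF k lam (X ⊕ Y) Z (mulADF k lam X Y F G) H) =
          mulADF k lam X (Y ⊕ Z) F (mulADF k lam Y Z G H))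
    ∧
    -- (iii) unitality
    (∀ (X : Type) [Fintype X] (F : ADF k X),
        ADFmapL k (Equiv.emptySum Empty X)
            (mulADF k lam Empty X (bulletADF k Empty) F) = F
        ∧ ADFmapL k (Equiv.sumEmpty X Empty)
            (mulADF k lam X Empty F (bulletADF k Empty)) = F) :=
  ⟨fun _ _ _ _ _ _ _ _ σ τ F G => ADFmapL_mulADF σ τ F G,
    fun _ _ _ _ _ _ F G H => mulADF_assoc F G H,
    fun _ _ F => ⟨mulADF_bulletADF_left F, mulADF_bulletADF_right F⟩⟩
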